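/- arXiv:2108.13949 — 3 statements merged into one kernel-verified Lean document; each statement's English description precedes it below -/
import Mathlib

section
/- For 0 < λ < μ, the smallest positive solution η of x = exp(−μ(1−x)/λ) satisfies η < λ/μ, and consequently the fork-join lower bound λH_n/(μ(1-η)) is strictly smaller than the upper bound λH_n/(μ(1-λ/μ)) for every n ≥ 1. -/
/-!
Put `c = μ/λ` and `s = c(1 - η) > 0`. Since `1 + s < exp s`, the fixed-point equation gives
`η (1 + c(1 - η)) < 1`, which rearranges to `(1 - η)(1 - cη) > 0`; as `η < 1` this is `η < 1/c`.
-/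

open Real

lemma exp_neg_lt_inv_one_add {s : ℝ} (hs : 0 < s) : exp (-s) < (1 + s)⁻¹ := by
  rw [exp_neg]
  exact inv_strictAnti₀ (by positivity) (by linarith [add_one_lt_exp hs.ne'])

lemma mul_lt_one_of_eq_exp_neg_mul_one_sub {c x : ℝ} (hc : 0 < c) (hx : x < 1)
    (hfix : x = exp (-(c * (1 - x)))) : c * x < 1 := by
  have hs : 0 < c * (1 - x) := mul_pos hc (sub_pos.mpr hx)
  have hbound : x * (1 + c * (1 - x)) < 1 := by
    have := hfix.trans_lt (exp_neg_lt_inv_one_add hs)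
    rwa [← one_div, lt_div_iff₀ (by linarith)] at this
  have hprod : 0 < (1 - x) * (1 - c * x) := by linarith
  linarith [pos_of_mul_pos_right hprod (sub_pos.mpr hx).le]

lemma sum_range_one_div_succ_pos {n : ℕ} (hn : 1 ≤ n) :
    0 < ∑ i ∈ Finset.range n, (1 : ℝ) / (i + 1) :=
  Finset.sum_pos (fun _ _ => by positivity) (Finset.nonempty_range_iff.mpr (by omega))

/-- The smallest positive solution `η ∈ [0,1)` of `x = exp(−μ(1−x)/λ)` satisfies
`η < λ/μ`; consequently the fork-join lower bound `λH_n/(μ(1-η))` is strictly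
smaller than the upper bound `λH_n/(μ(1-λ/μ))` for every `n ≥ 1`. -/
theorem stmt_8 (lam mu eta : ℝ) (hlam : 0 < lam) (hlt : lam < mu)
    (heta : eta ∈ Set.Ico (0 : ℝ) 1)
    (hfix : eta = Real.exp (-(mu * (1 - eta)) / lam)) :
    eta < lam / mu
    ∧ ∀ n : ℕ, 1 ≤ n →
        lam * (∑ i ∈ Finset.range n, (1 : ℝ) / (i + 1)) / (mu * (1 - eta))
          < lam * (∑ i ∈ Finset.range n, (1 : ℝ) / (i + 1)) / (mu * (1 - lam / mu)) := by
  have hmu : 0 < mu := hlam.trans hlt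
  have heta_lt : eta < lam / mu := by
    have := mul_lt_one_of_eq_exp_neg_mul_one_sub (div_pos hmu hlam) heta.2
      (hfix.trans (by congr 1; ring))
    rw [lt_div_iff₀ hmu]
    rwa [div_mul_eq_mul_div, div_lt_one hlam, mul_comm] at this
  refine ⟨heta_lt, fun n hn => div_lt_div_of_pos_left
    (mul_pos hlam (sum_range_one_div_succ_pos hn)) ?_ ?_⟩
  · exact mul_pos hmu (sub_pos.mpr ((div_lt_one hmu).mpr hlt))
  · exact mul_lt_mul_of_pos_left (by linarith) hmu
end

section
/- In the read-priority approximate system, the mean number of write requests equals E[W̄] = λ_w/(μ_0 − λ_w) + Σ_{i=1}^{n} λ_w/(β_{n−i} − λ_w), and this can be rewritten in closed form as E[W̄] = (n+1)ν/(n+1 − ρ_r(1+ν)) + (n+1)ν·(ψ(Δ_n + n) − ψ(Δ_n))/(n+1 − ρ_r), where ν = ρ_w/(1-ρ_w), Δ_n = 1 − ρ_r ν/(n+1−ρ_r), and ψ is the digamma function. -/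
/-! The first term and every summand are rational expressions in the rates: after the
substitution `ν = ρ_w/(1-ρ_w)` the `i`-th summand becomes `(n+1)ν/(n+1-ρ_r) · 1/(Δ_n + i - 1)`,
so the sum is `(n+1)ν/(n+1-ρ_r)` times `∑_{k<n} 1/(Δ_n + k)`, which the recurrence
`ψ(x+1) = ψ(x) + 1/x` telescopes to `ψ(Δ_n + n) - ψ(Δ_n)`. The recurrence itself is the
derivative of `log Γ(x+1) = log x + log Γ(x)`. -/

noncomputable def digamma (x : ℝ) : ℝ := deriv (fun y : ℝ => Real.log (Real.Gamma y)) x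

open Real Filter Finset

lemma differentiableAt_log_Gamma {x : ℝ} (hx : 0 < x) :
    DifferentiableAt ℝ (fun y => log (Gamma y)) x :=
  (differentiableAt_Gamma fun m => by linarith [(m.cast_nonneg : (0 : ℝ) ≤ m)]).log
    (Gamma_pos_of_pos hx).ne'

lemma digamma_add_one {x : ℝ} (hx : 0 < x) : digamma (x + 1) = digamma x + x⁻¹ := by
  have hrec : (fun y => log (Gamma (y + 1))) =ᶠ[nhds x] fun y => log (Gamma y) + log y := by
    filter_upwards [eventually_gt_nhds hx] with y hy
    rw [Gamma_add_one hy.ne', log_mul hy.ne' (Gamma_pos_of_pos hy).ne', add_comm]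
  rw [digamma, ← deriv_comp_add_const, hrec.deriv_eq,
    deriv_fun_add (differentiableAt_log_Gamma hx) (differentiableAt_log hx.ne'), deriv_log]
  rfl

lemma digamma_add_nat_sub_digamma {x : ℝ} (hx : 0 < x) (n : ℕ) :
    digamma (x + n) - digamma x = ∑ k ∈ range n, (x + k)⁻¹ := by
  induction n with
  | zero => simp
  | succ n ih =>
    rw [sum_range_succ, ← ih, Nat.cast_succ, ← add_assoc, digamma_add_one (by positivity)]
    ring

section Rates

variable {lw mw rr N nu : ℝ}

lemma first_stage_term_eq (hmw : mw ≠ 0) (hlm : lw ≠ mw) (hN : N ≠ 0)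
    (hnu : nu = (lw / mw) / (1 - lw / mw)) :
    lw / (mw * (1 - rr / N) - lw) = N * nu / (N - rr * (1 + nu)) := by
  have hml : mw - lw ≠ 0 := sub_ne_zero.mpr hlm.symm
  subst hnu
  field_simp
  ring

lemma stage_term_eq (hmw : mw ≠ 0) (hlm : lw ≠ mw) (hN : N ≠ 0) (hNr : N ≠ rr)
    (hnu : nu = (lw / mw) / (1 - lw / mw)) {Delta : ℝ} (hDelta : Delta = 1 - rr * nu / (N - rr))
    (k : ℝ) :
    lw / (((k + 1) * mw - k * lw) * (1 - rr / N) - lw) = N * nu / (N - rr) * (Delta + k)⁻¹ := by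
  have hml : mw - lw ≠ 0 := sub_ne_zero.mpr hlm.symm
  have hNr' : N - rr ≠ 0 := sub_ne_zero.mpr hNr
  subst hnu hDelta
  field_simp
  ring

end Rates

theorem stmt_10_general (lw mw rr : ℝ) (n : ℕ)
    (hmw : 0 < mw) (hrw : lw / mw < 1)
    (nu : ℝ) (hnu : nu = (lw / mw) / (1 - lw / mw))
    (hstab : rr * (1 + nu) < (n : ℝ) + 1) (hstab' : rr < (n : ℝ) + 1)
    (mu0 : ℝ) (hmu0 : mu0 = mw * (1 - rr / ((n : ℝ) + 1)))
    (beta : ℕ → ℝ)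
    (hbeta : ∀ i : ℕ, beta i
      = (((n : ℝ) - i) * mw - ((n : ℝ) - i - 1) * lw) * (1 - rr / ((n : ℝ) + 1)))
    (Delta : ℝ) (hDelta : Delta = 1 - rr * nu / ((n : ℝ) + 1 - rr)) :
    lw / (mu0 - lw) + ∑ i ∈ Finset.Icc 1 n, lw / (beta (n - i) - lw)
      = ((n : ℝ) + 1) * nu / ((n : ℝ) + 1 - rr * (1 + nu))
        + ((n : ℝ) + 1) * nu * (digamma (Delta + n) - digamma Delta)
          / ((n : ℝ) + 1 - rr) := by
  have hlm : lw ≠ mw := fun h => by simp [h, hmw.ne'] at hrw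
  have hN : (n : ℝ) + 1 ≠ 0 := by positivity
  have hDelta_pos : 0 < Delta := by
    rw [hDelta, sub_pos, div_lt_one (by linarith)]
    linarith
  have hbeta_rev : ∀ k ∈ range n, beta (n - (1 + k))
      = ((k + 1) * mw - k * lw) * (1 - rr / ((n : ℝ) + 1)) := by
    intro k hk
    rw [hbeta, Nat.cast_sub (by simp at hk; omega)]
    push_cast
    ring_nf
  have hsum : ∑ i ∈ Icc 1 n, lw / (beta (n - i) - lw)
      = ((n : ℝ) + 1) * nu / ((n : ℝ) + 1 - rr) * (digamma (Delta + n) - digamma Delta) := by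
    rw [← Ico_add_one_right_eq_Icc, sum_Ico_eq_sum_range, Nat.add_sub_cancel,
      digamma_add_nat_sub_digamma hDelta_pos, mul_sum]
    refine sum_congr rfl fun k hk => ?_
    rw [hbeta_rev k hk, stage_term_eq hmw.ne' hlm hN hstab'.ne' hnu hDelta]
  rw [hmu0, first_stage_term_eq hmw.ne' hlm hN hnu, hsum]
  ring

/-- In the read-priority approximate system, the mean number of write requests
`E[W̄] = λ_w/(μ_0 − λ_w) + ∑_{i=1}^n λ_w/(β_{n−i} − λ_w)` has the closed form
`(n+1)ν/(n+1 − ρ_r(1+ν)) + (n+1)ν(ψ(Δ_n+n) − ψ(Δ_n))/(n+1 − ρ_r)` where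
`ν = ρ_w/(1−ρ_w)` and `Δ_n = 1 − ρ_r ν/(n+1−ρ_r)`. -/
theorem stmt_10 (lw mw rr : ℝ) (n : ℕ) (hn : 0 < n)
    (hlw : 0 < lw) (hmw : 0 < mw) (hrw : lw / mw < 1) (hrr : 0 ≤ rr)
    (nu : ℝ) (hnu : nu = (lw / mw) / (1 - lw / mw))
    (hstab : rr * (1 + nu) < (n : ℝ) + 1) (hstab' : rr < (n : ℝ) + 1)
    (mu0 : ℝ) (hmu0 : mu0 = mw * (1 - rr / ((n : ℝ) + 1)))
    (beta : ℕ → ℝ)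
    (hbeta : ∀ i : ℕ, beta i
      = (((n : ℝ) - i) * mw - ((n : ℝ) - i - 1) * lw) * (1 - rr / ((n : ℝ) + 1)))
    (Delta : ℝ) (hDelta : Delta = 1 - rr * nu / ((n : ℝ) + 1 - rr)) :
    lw / (mu0 - lw) + ∑ i ∈ Finset.Icc 1 n, lw / (beta (n - i) - lw)
      = ((n : ℝ) + 1) * nu / ((n : ℝ) + 1 - rr * (1 + nu))
        + ((n : ℝ) + 1) * nu * (digamma (Delta + n) - digamma Delta)
          / ((n : ℝ) + 1 - rr) :=
  stmt_10_general lw mw rr n hmw hrw nu hnu hstab hstab' mu0 hmu0 beta hbeta Delta hDelta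
end

section
/- For the read-priority approximate system, the mean number of write requests p(n) is bounded below by ν·(1 + H_n) ≥ ν·ln(e(n+1)) for all n ≥ 1, where ν = ρ_w/(1−ρ_w); in particular p(n) → ∞ as n → ∞. -/
open Filter Finset

/-!
With `c = 1 - ρ_r/(n+1) ∈ (0, 1]`, the `k`-th summand of `p(n)` is `λ/(c(kμ - (k-1)λ) - λ)`, and
`c(kμ - (k-1)λ) - λ ≤ k(μ - λ)`, so it dominates the write-priority term `ν/k`. Summing over
`k = 1, …, n` plus the leading `k = 1` term gives `p(n) ≥ ν(1 + H_n)`, and `H_n ≥ log(n+1)` makes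
this diverge.
-/

lemma log_add_one_le_sum_range_one_div (n : ℕ) :
    Real.log ((n : ℝ) + 1) ≤ ∑ i ∈ range n, (1 : ℝ) / (i + 1) := by
  simpa [harmonic, one_div] using log_add_one_le_harmonic n

lemma sum_range_natCast_sub (g : ℝ → ℝ) (n : ℕ) :
    ∑ i ∈ range n, g ((n : ℝ) - i) = ∑ i ∈ range n, g (i + 1) := by
  rw [← sum_range_reflect (fun i : ℕ => g ((i : ℝ) + 1)) n]
  refine sum_congr rfl fun i hi => congrArg g ?_
  have hin := mem_range.mp hi
  rw [Nat.cast_sub (by omega), Nat.cast_sub (by omega)]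
  push_cast
  ring

lemma write_priority_term_le_read_priority_term {lw mw c k : ℝ} (hlw : 0 < lw) (hmw : 0 < mw)
    (hlc : lw < mw * c) (hc : c ≤ 1) (hk : 1 ≤ k) :
    lw / (mw - lw) / k ≤ lw / (c * (k * mw - (k - 1) * lw) - lw) := by
  have hlm : lw < mw := by nlinarith
  have hrate : mw ≤ k * mw - (k - 1) * lw := by nlinarith
  rw [div_div, mul_comm]
  exact div_le_div_of_nonneg_left hlw.le (by nlinarith) (by nlinarith)

lemma mul_one_add_sum_range_one_div_le {lw mw rr : ℝ} (hlw : 0 < lw) (hmw : 0 < mw)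
    (hrr : 0 ≤ rr) (n : ℕ) (hstable : lw / mw + rr / ((n : ℝ) + 1) < 1) :
    lw / (mw - lw) * (1 + ∑ i ∈ range n, (1 : ℝ) / (i + 1))
      ≤ lw / (mw * (1 - rr / ((n : ℝ) + 1)) - lw)
        + ∑ i ∈ range n,
            lw / ((1 - rr / ((n : ℝ) + 1)) * (((n : ℝ) - i) * mw - ((n : ℝ) - i - 1) * lw) - lw) := by
  set c := 1 - rr / ((n : ℝ) + 1)
  have hlc : lw < mw * c := by
    rw [mul_comm, ← div_lt_iff₀ hmw]
    linarith
  have hc : c ≤ 1 := by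
    have : 0 ≤ rr / ((n : ℝ) + 1) := by positivity
    linarith
  have hlead : lw / (mw - lw) ≤ lw / (mw * c - lw) := by
    simpa [mul_comm c] using write_priority_term_le_read_priority_term hlw hmw hlc hc le_rfl
  simp_rw [mul_add, mul_one, mul_sum, mul_one_div]
  rw [← sum_range_natCast_sub (fun x => lw / (mw - lw) / x)]
  refine add_le_add hlead (sum_le_sum fun i hi => ?_)
  have hin : (i : ℝ) + 1 ≤ n := by exact_mod_cast mem_range.mp hi
  exact write_priority_term_le_read_priority_term hlw hmw hlc hc (by linarith)

/-- For the read-priority approximate system, the mean number of write requests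
`p(n)` is bounded below by `ν(1+H_n) ≥ ν ln(e(n+1))`; in particular `p(n) → ∞`. -/
theorem stmt_11 (lw mw rr : ℝ)
    (hlw : 0 < lw) (hmw : 0 < mw) (hrw : lw / mw < 1) (hrr : 0 ≤ rr)
    (nu : ℝ) (hnu : nu = (lw / mw) / (1 - lw / mw))
    (p : ℕ → ℝ)
    (hp : ∀ n : ℕ, p n
      = lw / (mw * (1 - rr / ((n : ℝ) + 1)) - lw)
        + ∑ i ∈ Finset.range n,
            lw / ((1 - rr / ((n : ℝ) + 1))
              * (((n : ℝ) - i) * mw - ((n : ℝ) - i - 1) * lw) - lw)) :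
    (∀ n : ℕ, 1 ≤ n → lw / mw + rr / ((n : ℝ) + 1) < 1 →
      nu * Real.log (Real.exp 1 * ((n : ℝ) + 1))
        ≤ nu * (1 + ∑ i ∈ Finset.range n, (1 : ℝ) / (i + 1))
      ∧ nu * (1 + ∑ i ∈ Finset.range n, (1 : ℝ) / (i + 1)) ≤ p n)
    ∧ ((∀ n : ℕ, lw / mw + rr / ((n : ℝ) + 1) < 1) →
        Filter.Tendsto p Filter.atTop Filter.atTop) := by
  have hlm : lw < mw := (div_lt_one hmw).mp hrw
  have hnu' : nu = lw / (mw - lw) := by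
    rw [hnu]
    field_simp
  have hnu_pos : 0 < nu := hnu' ▸ div_pos hlw (by linarith)
  have hbound : ∀ n : ℕ, lw / mw + rr / ((n : ℝ) + 1) < 1 →
      nu * (1 + ∑ i ∈ range n, (1 : ℝ) / (i + 1)) ≤ p n := fun n hstable =>
    hnu' ▸ hp n ▸ mul_one_add_sum_range_one_div_le hlw hmw hrr n hstable
  refine ⟨fun n _ hstable => ⟨?_, hbound n hstable⟩, fun hstable => ?_⟩
  · rw [Real.log_mul (by positivity) (by positivity), Real.log_exp]
    gcongr
    exact log_add_one_le_sum_range_one_div n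
  · refine tendsto_atTop_mono (fun n => hbound n (hstable n)) ?_
    exact (tendsto_atTop_add_const_left _ 1
      Real.tendsto_sum_range_one_div_nat_succ_atTop).const_mul_atTop hnu_pos
end
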